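/- If X = (X_1,...,X_p) and Y = (Y_1,...,Y_q) are jointly Gaussian centered random vectors that are not independent, then the random variables ‖X‖² and ‖Y‖² are not independent (indeed their covariance is strictly positive). -/

import Mathlib

/-!
For a centered Gaussian variable `L` the moment generating function is `exp (v t² / 2)`, whose
fourth derivative at `0` gives `E[L⁴] = 3 E[L²]²`. Applying this to `U`, `V`, `U + V` and `U - V`
and polarizing yields Isserlis' identity `Cov(U², V²) = 2 E[UV]²` for a centered Gaussian pair.
Covariance is bilinear, so `Cov(‖X‖², ‖Y‖²) = 2 ∑ᵢⱼ E[XᵢYⱼ]²`, which is positive as soon as one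
cross-covariance is nonzero; independent variables would have covariance zero.
-/

open Real MeasureTheory ProbabilityTheory
open scoped NNReal

section ExpHalfSq

variable (c : ℝ)

lemma deriv_mul_exp_mul_sq_div_two {P P' : ℝ → ℝ} (hP : ∀ t, HasDerivAt P (P' t) t) :
    deriv (fun t ↦ P t * rexp (c * t ^ 2 / 2))
      = fun t ↦ (P' t + c * t * P t) * rexp (c * t ^ 2 / 2) := by
  funext t
  have he : HasDerivAt (fun t ↦ rexp (c * t ^ 2 / 2)) (c * t * rexp (c * t ^ 2 / 2)) t := by
    convert ((hasDerivAt_pow 2 t).const_mul c).div_const 2 |>.exp using 1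
    ring
  exact ((hP t).mul he).deriv.trans (by ring)

lemma iteratedDeriv_exp_mul_sq_div_two_zero :
    iteratedDeriv 2 (fun t ↦ rexp (c * t ^ 2 / 2)) 0 = c ∧
      iteratedDeriv 4 (fun t ↦ rexp (c * t ^ 2 / 2)) 0 = 3 * c ^ 2 := by
  have d1 : deriv (fun t ↦ rexp (c * t ^ 2 / 2)) = fun t ↦ c * t * rexp (c * t ^ 2 / 2) := by
    simpa using deriv_mul_exp_mul_sq_div_two c (P := fun _ ↦ 1) fun t ↦ hasDerivAt_const t 1
  have d2 : deriv (fun t ↦ c * t * rexp (c * t ^ 2 / 2))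
      = fun t ↦ (c + c ^ 2 * t ^ 2) * rexp (c * t ^ 2 / 2) := by
    rw [deriv_mul_exp_mul_sq_div_two c (P' := fun _ ↦ c) fun t ↦ by
      simpa using (hasDerivAt_id t).const_mul c]
    funext t; ring
  have d3 : deriv (fun t ↦ (c + c ^ 2 * t ^ 2) * rexp (c * t ^ 2 / 2))
      = fun t ↦ (3 * c ^ 2 * t + c ^ 3 * t ^ 3) * rexp (c * t ^ 2 / 2) := by
    rw [deriv_mul_exp_mul_sq_div_two c (P' := fun t ↦ c ^ 2 * (2 * t)) fun t ↦ by
      simpa using ((hasDerivAt_pow 2 t).const_mul (c ^ 2)).const_add c]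
    funext t; ring
  have d4 : deriv (fun t ↦ (3 * c ^ 2 * t + c ^ 3 * t ^ 3) * rexp (c * t ^ 2 / 2)) 0
      = 3 * c ^ 2 := by
    rw [deriv_mul_exp_mul_sq_div_two c (P' := fun t ↦ 3 * c ^ 2 + c ^ 3 * (3 * t ^ 2)) fun t ↦ by
      simpa using ((hasDerivAt_id t).const_mul (3 * c ^ 2)).fun_add
        ((hasDerivAt_pow 3 t).const_mul (c ^ 3))]
    simp
  simp only [iteratedDeriv_succ', iteratedDeriv_zero, d1, d2, d3, d4]
  simp

end ExpHalfSq

section GaussianPair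

variable {Ω : Type*} {mΩ : MeasurableSpace Ω} {P : Measure Ω}

section GaussianLaw

variable {L : Ω → ℝ} {v : ℝ≥0}

lemma integrableExpSet_eq_univ_of_map_eq_gaussianReal (hL : P.map L = gaussianReal 0 v) :
    integrableExpSet L P = Set.univ := by
  refine Set.eq_univ_of_forall fun t ↦ ?_
  by_contra h
  have hmgf := mgf_gaussianReal hL t
  rw [mgf, integral_undef h] at hmgf
  exact (exp_pos _).ne hmgf

lemma integrable_pow_of_map_eq_gaussianReal (hL : P.map L = gaussianReal 0 v) (n : ℕ) :
    Integrable (fun ω ↦ L ω ^ n) P :=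
  integrable_pow_of_mem_interior_integrableExpSet
    (by simp [integrableExpSet_eq_univ_of_map_eq_gaussianReal hL]) n

lemma memLp_sq_of_map_eq_gaussianReal (hL : P.map L = gaussianReal 0 v) :
    MemLp (fun ω ↦ L ω ^ 2) 2 P := by
  refine (memLp_two_iff_integrable_sq (integrable_pow_of_map_eq_gaussianReal hL 2).1).2 ?_
  simpa only [← pow_mul] using integrable_pow_of_map_eq_gaussianReal hL 4

lemma integral_pow_four_of_map_eq_gaussianReal (hL : P.map L = gaussianReal 0 v) :
    ∫ ω, L ω ^ 4 ∂P = 3 * (∫ ω, L ω ^ 2 ∂P) ^ 2 := by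
  have h0 : 0 ∈ interior (integrableExpSet L P) := by
    simp [integrableExpSet_eq_univ_of_map_eq_gaussianReal hL]
  have hmgf : mgf L P = fun t ↦ rexp (v * t ^ 2 / 2) := by
    funext t
    simp [mgf_gaussianReal hL t]
  obtain ⟨h2, h4⟩ := iteratedDeriv_exp_mul_sq_div_two_zero v
  have m2 := iteratedDeriv_mgf_zero h0 2
  have m4 := iteratedDeriv_mgf_zero h0 4
  rw [hmgf] at m2 m4
  simp only [Pi.pow_apply] at m2 m4
  rw [← m2, ← m4, h2, h4]

end GaussianLaw

def IsCenteredGaussianPair (U V : Ω → ℝ) (P : Measure Ω) : Prop :=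
  ∀ a c : ℝ, ∃ v : ℝ≥0, P.map (fun ω ↦ a * U ω + c * V ω) = gaussianReal 0 v

namespace IsCenteredGaussianPair

variable {U V : Ω → ℝ}

lemma exists_map_left (h : IsCenteredGaussianPair U V P) : ∃ v, P.map U = gaussianReal 0 v := by
  simpa using h 1 0

lemma exists_map_right (h : IsCenteredGaussianPair U V P) : ∃ v, P.map V = gaussianReal 0 v := by
  simpa using h 0 1

lemma exists_map_add (h : IsCenteredGaussianPair U V P) :
    ∃ v, P.map (fun ω ↦ U ω + V ω) = gaussianReal 0 v := by
  simpa using h 1 1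

lemma exists_map_sub (h : IsCenteredGaussianPair U V P) :
    ∃ v, P.map (fun ω ↦ U ω - V ω) = gaussianReal 0 v := by
  simpa [← sub_eq_add_neg] using h 1 (-1)

lemma covariance_sq_sq [IsProbabilityMeasure P] (h : IsCenteredGaussianPair U V P) :
    cov[fun ω ↦ U ω ^ 2, fun ω ↦ V ω ^ 2; P] = 2 * (∫ ω, U ω * V ω ∂P) ^ 2 := by
  obtain ⟨_, hU⟩ := h.exists_map_left
  obtain ⟨_, hV⟩ := h.exists_map_right
  obtain ⟨_, hS⟩ := h.exists_map_add
  obtain ⟨_, hD⟩ := h.exists_map_sub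
  have iU := integrable_pow_of_map_eq_gaussianReal hU
  have iV := integrable_pow_of_map_eq_gaussianReal hV
  have iS := integrable_pow_of_map_eq_gaussianReal hS
  have iD := integrable_pow_of_map_eq_gaussianReal hD
  have polarization_two : ∫ ω, U ω * V ω ∂P
      = ((∫ ω, (U ω + V ω) ^ 2 ∂P) - ∫ ω, (U ω - V ω) ^ 2 ∂P) / 4 := by
    rw [← integral_sub (iS 2) (iD 2), ← integral_div]
    congr 1 with ω; ring
  have parallelogram : (∫ ω, (U ω + V ω) ^ 2 ∂P) + ∫ ω, (U ω - V ω) ^ 2 ∂P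
      = 2 * (∫ ω, U ω ^ 2 ∂P) + 2 * ∫ ω, V ω ^ 2 ∂P := by
    rw [← integral_add (iS 2) (iD 2), ← integral_const_mul, ← integral_const_mul,
      ← integral_add ((iU 2).const_mul 2) ((iV 2).const_mul 2)]
    congr 1 with ω; ring
  have polarization_four : ∫ ω, U ω ^ 2 * V ω ^ 2 ∂P
      = ((∫ ω, (U ω + V ω) ^ 4 ∂P) + (∫ ω, (U ω - V ω) ^ 4 ∂P)
        - 2 * (∫ ω, U ω ^ 4 ∂P) - 2 * ∫ ω, V ω ^ 4 ∂P) / 12 := by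
    have iSD : Integrable (fun ω ↦ (U ω + V ω) ^ 4 + (U ω - V ω) ^ 4) P := (iS 4).add (iD 4)
    have iSDU : Integrable (fun ω ↦ (U ω + V ω) ^ 4 + (U ω - V ω) ^ 4 - 2 * U ω ^ 4) P :=
      iSD.sub ((iU 4).const_mul 2)
    rw [← integral_add (iS 4) (iD 4), ← integral_const_mul, ← integral_const_mul,
      ← integral_sub iSD ((iU 4).const_mul 2), ← integral_sub iSDU ((iV 4).const_mul 2),
      ← integral_div]
    congr 1 with ω; ring
  rw [covariance_eq_sub (memLp_sq_of_map_eq_gaussianReal hU) (memLp_sq_of_map_eq_gaussianReal hV)]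
  change ∫ ω, U ω ^ 2 * V ω ^ 2 ∂P - _ = _
  rw [polarization_four, polarization_two, integral_pow_four_of_map_eq_gaussianReal hU,
    integral_pow_four_of_map_eq_gaussianReal hV, integral_pow_four_of_map_eq_gaussianReal hS,
    integral_pow_four_of_map_eq_gaussianReal hD]
  set A := ∫ ω, (U ω + V ω) ^ 2 ∂P
  set B := ∫ ω, (U ω - V ω) ^ 2 ∂P
  set s := ∫ ω, U ω ^ 2 ∂P
  set t := ∫ ω, V ω ^ 2 ∂P
  linear_combination (A + B + 2 * s + 2 * t) / 8 * parallelogram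

end IsCenteredGaussianPair

end GaussianPair

theorem stmt_2_general
    {Ω : Type*} [MeasureSpace Ω] [IsProbabilityMeasure (ℙ : Measure Ω)]
    {p q : ℕ} (X : Ω → Fin p → ℝ) (Y : Ω → Fin q → ℝ)
    (hGauss : ∀ (a : Fin p → ℝ) (b : Fin q → ℝ), ∃ v : NNReal,
      Measure.map (fun ω => (∑ i, a i * X ω i) + ∑ j, b j * Y ω j) ℙ = gaussianReal 0 v)
    (hdep : ∃ i j, (∫ ω, X ω i * Y ω j) ≠ 0) :
    0 < (∫ ω, (∑ i, (X ω i) ^ 2) * (∑ j, (Y ω j) ^ 2))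
        - (∫ ω, ∑ i, (X ω i) ^ 2) * (∫ ω, ∑ j, (Y ω j) ^ 2)
      ∧ ¬ IndepFun (fun ω => ∑ i, (X ω i) ^ 2) (fun ω => ∑ j, (Y ω j) ^ 2) ℙ := by
  obtain ⟨i₀, j₀, hcorr⟩ := hdep
  have hpair (i : Fin p) (j : Fin q) :
      IsCenteredGaussianPair (fun ω ↦ X ω i) (fun ω ↦ Y ω j) ℙ := fun a c ↦ by
    simpa [Pi.single_apply] using hGauss (Pi.single i a) (Pi.single j c)
  have hX2 (i : Fin p) : MemLp (fun ω ↦ X ω i ^ 2) 2 ℙ :=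
    memLp_sq_of_map_eq_gaussianReal (hpair i j₀).exists_map_left.choose_spec
  have hY2 (j : Fin q) : MemLp (fun ω ↦ Y ω j ^ 2) 2 ℙ :=
    memLp_sq_of_map_eq_gaussianReal (hpair i₀ j).exists_map_right.choose_spec
  have hsumX : MemLp (fun ω ↦ ∑ i, X ω i ^ 2) 2 ℙ := memLp_finsetSum _ fun i _ ↦ hX2 i
  have hsumY : MemLp (fun ω ↦ ∑ j, Y ω j ^ 2) 2 ℙ := memLp_finsetSum _ fun j _ ↦ hY2 j
  have hcov : cov[fun ω ↦ ∑ i, X ω i ^ 2, fun ω ↦ ∑ j, Y ω j ^ 2; ℙ]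
      = ∑ i, ∑ j, 2 * (∫ ω, X ω i * Y ω j) ^ 2 := by
    rw [covariance_fun_sum_fun_sum hX2 hY2]
    simp only [(hpair _ _).covariance_sq_sq]
  have hpos : 0 < cov[fun ω ↦ ∑ i, X ω i ^ 2, fun ω ↦ ∑ j, Y ω j ^ 2; ℙ] := by
    rw [hcov]
    refine Finset.sum_pos' (fun i _ ↦ by positivity) ⟨i₀, Finset.mem_univ _, ?_⟩
    exact Finset.sum_pos' (fun j _ ↦ by positivity) ⟨j₀, Finset.mem_univ _, by positivity⟩
  refine ⟨by rwa [covariance_eq_sub hsumX hsumY] at hpos, fun hind ↦ ?_⟩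
  exact hpos.ne' (hind.covariance_eq_zero hsumX hsumY)

/-- If `X ∈ ℝ^p` and `Y ∈ ℝ^q` are jointly Gaussian centered random vectors that are not
independent (some cross-covariance `Cov(X_i, Y_j) = E[X_i Y_j]` is nonzero), then
`Cov(‖X‖², ‖Y‖²) > 0`; in particular `‖X‖²` and `‖Y‖²` are not independent. -/
theorem stmt_2
    {Ω : Type*} [MeasureSpace Ω] [IsProbabilityMeasure (ℙ : Measure Ω)]
    {p q : ℕ} (X : Ω → Fin p → ℝ) (Y : Ω → Fin q → ℝ)
    (hX : Measurable X) (hY : Measurable Y)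
    (hGauss : ∀ (a : Fin p → ℝ) (b : Fin q → ℝ), ∃ v : NNReal,
      Measure.map (fun ω => (∑ i, a i * X ω i) + ∑ j, b j * Y ω j) ℙ = gaussianReal 0 v)
    (hdep : ∃ i j, (∫ ω, X ω i * Y ω j) ≠ 0) :
    0 < (∫ ω, (∑ i, (X ω i) ^ 2) * (∑ j, (Y ω j) ^ 2))
        - (∫ ω, ∑ i, (X ω i) ^ 2) * (∫ ω, ∑ j, (Y ω j) ^ 2)
      ∧ ¬ IndepFun (fun ω => ∑ i, (X ω i) ^ 2) (fun ω => ∑ j, (Y ω j) ^ 2) ℙ :=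
  stmt_2_general X Y hGauss hdep
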